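/- Let p, q ∈ K²\{0} and k ∈ K⁴\{0}. Define T₁ = {σ₁(p,t) + σ₁(s, ρ'(q,k)) : t ∈ M_{2×4}(K), s ∈ K²}, T₂ = {σ₂(q,t) + σ₂(s, ρ'(p,k)) : t ∈ M_{2×4}(K), s ∈ K²}, and T_C = {ρ(u,k) + ρ(σ(p,q), k') : u ∈ A_p + B_q, k' ∈ K⁴}, subspaces of M₄(K). Then T₁ ∩ T₂ = T_C; that is, at every point φ = ρ(σ(p,q),k) of Z₁ ∩ Z₂, the intersection of the tangent spaces to Z₁ and to Z₂ at φ equals the tangent space to Z₁ ∩ Z₂ at φ. -/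

import Mathlib

/-! On `A_p` and `B_q` (for `p, q ≠ 0`) the points are exactly `σ(p,c)` and `σ(d,q)`, and
`σ₁(s, ρ'(r,k)) = ρ(σ(s,r), k)`, `σ₂(s, ρ'(r,k)) = ρ(σ(r,s), k)`; so every element of `T_C` can be
written down explicitly in the form of `T₁` and of `T₂`. Conversely, if
`σ₁(p,t) + σ₁(s,ρ'(q,k)) = σ₂(q,t') + σ₂(s',ρ'(p,k))`, eliminating `t'` between the rows shows that
`q₀t¹ - q₁t⁰` is a multiple of `k`, hence `t = ρ'(z,k) + ρ'(q,k')`, and the matrix is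
`ρ(σ(p,z) + σ(s,q), k) + ρ(σ(p,q), k')`. -/

variable {K : Type*} [Field K]

/-- Membership in the a-line cone `A_s = {x : s₁x₀ = s₀x₂ ∧ s₁x₁ = s₀x₃}`. -/
def memA (s : Fin 2 → K) (x : Fin 4 → K) : Prop :=
  s 1 * x 0 = s 0 * x 2 ∧ s 1 * x 1 = s 0 * x 3

/-- Membership in the b-line cone `B_s = {x : s₁x₀ = s₀x₁ ∧ s₁x₂ = s₀x₃}`. -/
def memB (s : Fin 2 → K) (x : Fin 4 → K) : Prop :=
  s 1 * x 0 = s 0 * x 1 ∧ s 1 * x 2 = s 0 * x 3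

/-- The Segre embedding `σ₁`: rows `(s₀t⁰, s₀t¹, s₁t⁰, s₁t¹)`. -/
def segre1 (s : Fin 2 → K) (t : Matrix (Fin 2) (Fin 4) K) :
    Matrix (Fin 4) (Fin 4) K :=
  Matrix.of fun i j => s (![0, 0, 1, 1] i) * t (![0, 1, 0, 1] i) j

/-- The Segre embedding `σ₂`: rows `(s₀t⁰, s₁t⁰, s₀t¹, s₁t¹)`. -/
def segre2 (s : Fin 2 → K) (t : Matrix (Fin 2) (Fin 4) K) :
    Matrix (Fin 4) (Fin 4) K :=
  Matrix.of fun i j => s (![0, 1, 0, 1] i) * t (![0, 0, 1, 1] i) j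

/-- The Segre map `σ : ℙ¹ × ℙ¹ → ℙ³`, `σ(p,q) = (p₀q₀, p₀q₁, p₁q₀, p₁q₁)`. -/
def segreV (p q : Fin 2 → K) : Fin 4 → K :=
  ![p 0 * q 0, p 0 * q 1, p 1 * q 0, p 1 * q 1]

/-- The rank-one matrix `ρ(u,k)ᵢⱼ = uᵢkⱼ`. -/
def rho (u k : Fin 4 → K) : Matrix (Fin 4) (Fin 4) K :=
  Matrix.of fun i j => u i * k j

/-- The rank-one `2×4` matrix `ρ'(p,k)ᵢⱼ = pᵢkⱼ`. -/
def rho' (p : Fin 2 → K) (k : Fin 4 → K) : Matrix (Fin 2) (Fin 4) K :=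
  Matrix.of fun i j => p i * k j

lemma apply_zero_ne_zero_or_apply_one_ne_zero {p : Fin 2 → K} (hp : p ≠ 0) :
    p 0 ≠ 0 ∨ p 1 ≠ 0 := by
  contrapose! hp
  ext i
  fin_cases i <;> simp [hp]

section LinearAlgebra

variable (p q s : Fin 2 → K) (k : Fin 4 → K)

lemma segre1_add (t t' : Matrix (Fin 2) (Fin 4) K) :
    segre1 s (t + t') = segre1 s t + segre1 s t' := by
  ext i j
  simp [segre1, mul_add]

lemma segre2_add (t t' : Matrix (Fin 2) (Fin 4) K) :
    segre2 s (t + t') = segre2 s t + segre2 s t' := by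
  ext i j
  simp [segre2, mul_add]

lemma rho_add_left (u v : Fin 4 → K) : rho (u + v) k = rho u k + rho v k := by
  ext i j
  simp [rho, add_mul]

lemma segre1_rho' : segre1 s (rho' q k) = rho (segreV s q) k := by
  ext i j
  fin_cases i <;> simp [segre1, rho', rho, segreV, mul_assoc]

lemma segre2_rho' : segre2 s (rho' p k) = rho (segreV p s) k := by
  ext i j
  fin_cases i <;> simp [segre2, rho', rho, segreV] <;> ring

end LinearAlgebra

lemma memA_iff_exists_segreV {p : Fin 2 → K} (hp : p ≠ 0) {a : Fin 4 → K} :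
    memA p a ↔ ∃ c, a = segreV p c := by
  constructor
  · rintro ⟨h₁, h₂⟩
    rcases apply_zero_ne_zero_or_apply_one_ne_zero hp with h₀ | h₀
    · refine ⟨![a 0 / p 0, a 1 / p 0], ?_⟩
      ext i; fin_cases i <;> simp only [Fin.reduceFinMk, segreV, Matrix.cons_val] <;> field_simp
      · linear_combination -h₁
      · linear_combination -h₂
    · refine ⟨![a 2 / p 1, a 3 / p 1], ?_⟩
      ext i; fin_cases i <;> simp only [Fin.reduceFinMk, segreV, Matrix.cons_val] <;> field_simp
      · linear_combination h₁
      · linear_combination h₂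
  · rintro ⟨c, rfl⟩
    constructor <;> simp [segreV] <;> ring

lemma memB_iff_exists_segreV {q : Fin 2 → K} (hq : q ≠ 0) {b : Fin 4 → K} :
    memB q b ↔ ∃ d, b = segreV d q := by
  constructor
  · rintro ⟨h₁, h₂⟩
    rcases apply_zero_ne_zero_or_apply_one_ne_zero hq with h₀ | h₀
    · refine ⟨![b 0 / q 0, b 2 / q 0], ?_⟩
      ext i; fin_cases i <;> simp only [Fin.reduceFinMk, segreV, Matrix.cons_val] <;> field_simp
      · linear_combination -h₁
      · linear_combination -h₂
    · refine ⟨![b 1 / q 1, b 3 / q 1], ?_⟩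
      ext i; fin_cases i <;> simp only [Fin.reduceFinMk, segreV, Matrix.cons_val] <;> field_simp
      · linear_combination h₁
      · linear_combination h₂
  · rintro ⟨d, rfl⟩
    constructor <;> simp [segreV] <;> ring

lemma wedge_eq_smul_of_segre1_eq_segre2 {p q s s' : Fin 2 → K} {k : Fin 4 → K}
    {t t' : Matrix (Fin 2) (Fin 4) K} (hp : p ≠ 0)
    (h : segre1 p t + segre1 s (rho' q k) = segre2 q t' + segre2 s' (rho' p k)) :
    q 0 • t 1 - q 1 • t 0 = (q 0 * s' 1 - q 1 * s' 0) • k := by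
  ext l
  have entry : ∀ r, (segre1 p t + segre1 s (rho' q k)) r l
      = (segre2 q t' + segre2 s' (rho' p k)) r l := fun r => by rw [h]
  have e₀ := entry 0
  have e₁ := entry 1
  have e₂ := entry 2
  have e₃ := entry 3
  simp only [segre1, segre2, rho', Matrix.add_apply, Matrix.of_apply, Matrix.cons_val]
    at e₀ e₁ e₂ e₃
  simp only [Pi.sub_apply, Pi.smul_apply, smul_eq_mul]
  -- `q₀ · row₁ - q₁ · row₀` eliminates `t'` and leaves `p₀` times the claim;
  -- rows 2, 3 give `p₁` times it.
  rcases apply_zero_ne_zero_or_apply_one_ne_zero hp with h₀ | h₀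
  · refine mul_left_cancel₀ h₀ ?_
    linear_combination q 0 * e₁ - q 1 * e₀
  · refine mul_left_cancel₀ h₀ ?_
    linear_combination q 0 * e₃ - q 1 * e₂

lemma exists_eq_rho'_add_rho'_of_wedge_eq_smul {q : Fin 2 → K} (hq : q ≠ 0)
    {t : Matrix (Fin 2) (Fin 4) K} {μ : K} {k : Fin 4 → K}
    (h : q 0 • t 1 - q 1 • t 0 = μ • k) :
    ∃ z k', t = rho' z k + rho' q k' := by
  have h' := fun l => congrFun h l
  simp only [Pi.sub_apply, Pi.smul_apply, smul_eq_mul] at h'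
  rcases apply_zero_ne_zero_or_apply_one_ne_zero hq with h₀ | h₀
  · refine ⟨![0, μ / q 0], (q 0)⁻¹ • t 0, ?_⟩
    ext j l; fin_cases j <;> simp only [Fin.zero_eta, Fin.mk_one, rho', Matrix.add_apply,
      Matrix.of_apply, Pi.smul_apply, smul_eq_mul, Matrix.cons_val, zero_mul, zero_add]
      <;> field_simp
    linear_combination h' l
  · refine ⟨![-μ / q 1, 0], (q 1)⁻¹ • t 1, ?_⟩
    ext j l; fin_cases j <;> simp only [Fin.zero_eta, Fin.mk_one, rho', Matrix.add_apply,
      Matrix.of_apply, Pi.smul_apply, smul_eq_mul, Matrix.cons_val, zero_mul, zero_add]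
      <;> field_simp
    linear_combination -h' l

theorem tangent_spaces_intersect_cleanly_general
    (p q : Fin 2 → K) (k : Fin 4 → K) (hp : p ≠ 0) (hq : q ≠ 0) :
    {χ : Matrix (Fin 4) (Fin 4) K |
        ∃ (t : Matrix (Fin 2) (Fin 4) K) (s : Fin 2 → K),
          χ = segre1 p t + segre1 s (rho' q k)} ∩
      {χ : Matrix (Fin 4) (Fin 4) K |
        ∃ (t : Matrix (Fin 2) (Fin 4) K) (s : Fin 2 → K),
          χ = segre2 q t + segre2 s (rho' p k)}
      = {χ : Matrix (Fin 4) (Fin 4) K |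
          ∃ (u : Fin 4 → K) (k' : Fin 4 → K),
            (∃ a b : Fin 4 → K, memA p a ∧ memB q b ∧ u = a + b) ∧
            χ = rho u k + rho (segreV p q) k'} := by
  ext χ
  constructor
  · rintro ⟨⟨t, s, rfl⟩, ⟨t', s', h⟩⟩
    obtain ⟨z, k', rfl⟩ :=
      exists_eq_rho'_add_rho'_of_wedge_eq_smul hq (wedge_eq_smul_of_segre1_eq_segre2 hp h)
    refine ⟨segreV p z + segreV s q, k', ⟨segreV p z, segreV s q,
      (memA_iff_exists_segreV hp).2 ⟨z, rfl⟩, (memB_iff_exists_segreV hq).2 ⟨s, rfl⟩, rfl⟩,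
      ?_⟩
    rw [segre1_add, segre1_rho', segre1_rho', segre1_rho', rho_add_left]
    abel
  · rintro ⟨_, k', ⟨a, b, ha, hb, rfl⟩, rfl⟩
    obtain ⟨c, rfl⟩ := (memA_iff_exists_segreV hp).1 ha
    obtain ⟨d, rfl⟩ := (memB_iff_exists_segreV hq).1 hb
    refine ⟨⟨rho' c k + rho' q k', d, ?_⟩, ⟨rho' d k + rho' p k', c, ?_⟩⟩
    · rw [segre1_add, segre1_rho', segre1_rho', segre1_rho', rho_add_left]
      abel
    · rw [segre2_add, segre2_rho', segre2_rho', segre2_rho', rho_add_left]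
      abel

/-- At every point `ρ(σ(p,q),k)` of `Z₁ ∩ Z₂`, the intersection of the tangent
spaces to `Z₁` and to `Z₂` equals the tangent space to `Z₁ ∩ Z₂`. -/
theorem tangent_spaces_intersect_cleanly [IsAlgClosed K] [CharZero K]
    (p q : Fin 2 → K) (k : Fin 4 → K) (hp : p ≠ 0) (hq : q ≠ 0) (hk : k ≠ 0) :
    {χ : Matrix (Fin 4) (Fin 4) K |
        ∃ (t : Matrix (Fin 2) (Fin 4) K) (s : Fin 2 → K),
          χ = segre1 p t + segre1 s (rho' q k)} ∩
      {χ : Matrix (Fin 4) (Fin 4) K |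
        ∃ (t : Matrix (Fin 2) (Fin 4) K) (s : Fin 2 → K),
          χ = segre2 q t + segre2 s (rho' p k)}
      = {χ : Matrix (Fin 4) (Fin 4) K |
          ∃ (u : Fin 4 → K) (k' : Fin 4 → K),
            (∃ a b : Fin 4 → K, memA p a ∧ memB q b ∧ u = a + b) ∧
            χ = rho u k + rho (segreV p q) k'} :=
  tangent_spaces_intersect_cleanly_general p q k hp hq
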